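/- For all w1,w2,w3 ∈ G(d) one has ∇̃_{w1}(T_{w2}w3) − T_{∇̃_{w1}w2}w3 − T_{w2}(∇̃_{w1}w3) = 0; that is, the tensor T is parallel with respect to the connection ∇̃ (∇̃T = 0). -/

import Mathlib

open Module

variable {H D : Type} [LieRing H] [LieAlgebra ℝ H] [FiniteDimensional ℝ H]
  [LieRing D] [LieAlgebra ℝ D] [FiniteDimensional ℝ D]

/-- `beta BD π x y` is the element `β(x,y)` of `h*` given by `a ↦ ⟨π(a)x, y⟩_d`. -/
def beta (BD : LinearMap.BilinForm ℝ D) (π : H →ₗ[ℝ] D →ₗ[ℝ] D) (x y : D) : Dual ℝ H :=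
  (BD.flip y).comp (π.flip x)

/-- The inverse of the isomorphism `ℓ : h → h*`, `ℓ(h) = ⟨h,·⟩_h`. -/
noncomputable def ellInv (BH : LinearMap.BilinForm ℝ H) (hBH : BH.Nondegenerate)
    (α : Dual ℝ H) : H :=
  (LinearMap.BilinForm.toDual BH hBH).symm α

/-- The tensor `T_{x₁+ℓ(h₁)}(x₂+ℓ(h₂)) = ½([x₁,x₂]_d + β(x₁,x₂) + π(h₁)x₂ − π(h₂)x₁)
+ ℓ([h₁,h₂]_h)`. -/
noncomputable def Tmap (BH : LinearMap.BilinForm ℝ H) (hBH : BH.Nondegenerate)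
    (BD : LinearMap.BilinForm ℝ D) (π : H →ₗ[ℝ] D →ₗ[ℝ] D)
    (u v : D × Dual ℝ H) : D × Dual ℝ H :=
  ((2⁻¹ : ℝ) • (⁅u.1, v.1⁆ + π (ellInv BH hBH u.2) v.1 - π (ellInv BH hBH v.2) u.1),
   (2⁻¹ : ℝ) • beta BD π u.1 v.1 + BH ⁅ellInv BH hBH u.2, ellInv BH hBH v.2⁆)

/-- The connection `∇̃ = T − ∇`: `∇̃_{x₁+ℓ(h₁)}(x₂+ℓ(h₂)) = π(h₁)x₂ + ℓ([h₁,h₂]_h)`. -/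
noncomputable def tnab (BH : LinearMap.BilinForm ℝ H) (hBH : BH.Nondegenerate)
    (π : H →ₗ[ℝ] D →ₗ[ℝ] D) (u v : D × Dual ℝ H) : D × Dual ℝ H :=
  (π (ellInv BH hBH u.2) v.1, BH ⁅ellInv BH hBH u.2, ellInv BH hBH v.2⁆)

/-!
Both components of `∇̃T` are checked directly. On `d` the identity reduces to each `π(h)` being a
derivation and `π` being a homomorphism. On `h*` it reduces to the Jacobi identity in `h` together
with the `h`-equivariance of `ℓ⁻¹ ∘ β`, which comes from the invariance of `⟨,⟩_h` and the
skew-symmetry of `π(h)`.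
-/

section ellInv

variable (BH : LinearMap.BilinForm ℝ H) (hBH : BH.Nondegenerate)

lemma ellInv_apply_self (c : H) : ellInv BH hBH (BH c) = c :=
  (LinearMap.BilinForm.toDual BH hBH).symm_apply_apply c

lemma apply_ellInv (α : Dual ℝ H) (a : H) : BH (ellInv BH hBH α) a = α a :=
  LinearMap.BilinForm.apply_toDual_symm_apply α a

lemma ellInv_add (α β : Dual ℝ H) :
    ellInv BH hBH (α + β) = ellInv BH hBH α + ellInv BH hBH β :=
  map_add _ α β

lemma ellInv_smul (r : ℝ) (α : Dual ℝ H) : ellInv BH hBH (r • α) = r • ellInv BH hBH α :=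
  map_smul _ r α

end ellInv

omit [FiniteDimensional ℝ D] in
/-- `ℓ⁻¹ ∘ β : d × d → h` is `h`-equivariant. -/
lemma apply_lie_ellInv_beta (BH : LinearMap.BilinForm ℝ H) (hBH : BH.Nondegenerate)
    (hBHinv : ∀ a b c : H, BH ⁅a, b⁆ c = - BH b ⁅a, c⁆)
    (BD : LinearMap.BilinForm ℝ D) (π : H →ₗ[ℝ] D →ₗ[ℝ] D)
    (hπhom : ∀ a b : H, π ⁅a, b⁆ = π a ∘ₗ π b - π b ∘ₗ π a)
    (hπskew : ∀ a : H, ∀ x y : D, BD (π a x) y = - BD x (π a y)) (h : H) (x y : D) :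
    BH ⁅h, ellInv BH hBH (beta BD π x y)⁆ = beta BD π (π h x) y + beta BD π x (π h y) := by
  ext a
  have hskew : BD (π a x) (π h y) = - BD (π h (π a x)) y := by
    rw [hπskew h (π a x) y, neg_neg]
  calc BH ⁅h, ellInv BH hBH (beta BD π x y)⁆ a
      = - BD (π ⁅h, a⁆ x) y := by rw [hBHinv, apply_ellInv]; rfl
    _ = BD (π a (π h x)) y + BD (π a x) (π h y) := by
      rw [hπhom, hskew]
      simp only [LinearMap.sub_apply, LinearMap.comp_apply, map_sub]
      ring

theorem Tmap_parallel_general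
    (BH : LinearMap.BilinForm ℝ H)
    (hBHnd : BH.Nondegenerate)
    (hBHinv : ∀ a b c : H, BH ⁅a, b⁆ c = - BH b ⁅a, c⁆)
    (BD : LinearMap.BilinForm ℝ D)
    (π : H →ₗ[ℝ] D →ₗ[ℝ] D)
    (hπder : ∀ a : H, ∀ x y : D, π a ⁅x, y⁆ = ⁅π a x, y⁆ + ⁅x, π a y⁆)
    (hπhom : ∀ a b : H, π ⁅a, b⁆ = π a ∘ₗ π b - π b ∘ₗ π a)
    (hπskew : ∀ a : H, ∀ x y : D, BD (π a x) y = - BD x (π a y)) :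
    ∀ w₁ w₂ w₃ : D × Dual ℝ H,
      tnab BH hBHnd π w₁ (Tmap BH hBHnd BD π w₂ w₃)
        - Tmap BH hBHnd BD π (tnab BH hBHnd π w₁ w₂) w₃
        - Tmap BH hBHnd BD π w₂ (tnab BH hBHnd π w₁ w₃) = 0 := by
  rintro ⟨x₁, α₁⟩ ⟨x₂, α₂⟩ ⟨x₃, α₃⟩
  simp only [tnab, Tmap, ellInv_apply_self, ellInv_add, ellInv_smul]
  set h₁ := ellInv BH hBHnd α₁
  set h₂ := ellInv BH hBHnd α₂
  set h₃ := ellInv BH hBHnd α₃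
  refine Prod.ext ?_ ?_
  · simp only [Prod.fst_sub, Prod.fst_zero, map_smul, map_add, map_sub, hπder, hπhom,
      LinearMap.sub_apply, LinearMap.comp_apply]
    module
  · simp only [Prod.snd_sub, Prod.snd_zero, lie_add, lie_smul, leibniz_lie h₁ h₂ h₃, map_add,
      map_smul, apply_lie_ellInv_beta BH hBHnd hBHinv BD π hπhom hπskew]
    module

/-- The homogeneous structure `T` is parallel for `∇̃`: `∇̃T = 0`. -/
theorem Tmap_parallel
    (BH : LinearMap.BilinForm ℝ H)
    (hBHsymm : ∀ a b : H, BH a b = BH b a)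
    (hBHnd : BH.Nondegenerate)
    (hBHinv : ∀ a b c : H, BH ⁅a, b⁆ c = - BH b ⁅a, c⁆)
    (BD : LinearMap.BilinForm ℝ D)
    (hBDsymm : ∀ x y : D, BD x y = BD y x)
    (hBDnd : BD.Nondegenerate)
    (hBDinv : ∀ x y z : D, BD ⁅x, y⁆ z = - BD y ⁅x, z⁆)
    (π : H →ₗ[ℝ] D →ₗ[ℝ] D)
    (hπder : ∀ a : H, ∀ x y : D, π a ⁅x, y⁆ = ⁅π a x, y⁆ + ⁅x, π a y⁆)
    (hπhom : ∀ a b : H, π ⁅a, b⁆ = π a ∘ₗ π b - π b ∘ₗ π a)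
    (hπskew : ∀ a : H, ∀ x y : D, BD (π a x) y = - BD x (π a y)) :
    ∀ w₁ w₂ w₃ : D × Dual ℝ H,
      tnab BH hBHnd π w₁ (Tmap BH hBHnd BD π w₂ w₃)
        - Tmap BH hBHnd BD π (tnab BH hBHnd π w₁ w₂) w₃
        - Tmap BH hBHnd BD π w₂ (tnab BH hBHnd π w₁ w₃) = 0 :=
  Tmap_parallel_general BH hBHnd hBHinv BD π hπder hπhom hπskew
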